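/- Let λ ∈ X and let w ∈ W be such that wλ is dominant. Then in the extended affine braid group B_aff one has T_{t_λ} = T_{w⁻¹} · T_{t_{wλ}} · (T_{w⁻¹})⁻¹. (Since wλ is dominant, T_{t_{wλ}} is the element θ_{wλ} of the Bernstein presentation, so this is the identity T_{t_λ} = T_{w⁻¹} θ_{wλ} (T_{w⁻¹})⁻¹.) -/

import Mathlib

open scoped BigOperators

/-- The multiplicative group structure on `AddAut A` (composition), as in the older Mathlib,
where `AddAut A` was a `Group`; current Mathlib makes it an `AddGroup` instead. -/
instance AddAut.groupOfComp (A : Type*) [Add A] : Group (AddAut A) where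
  mul g h := AddEquiv.trans h g
  one := AddEquiv.refl _
  inv := AddEquiv.symm
  mul_assoc _ _ _ := rfl
  one_mul _ := rfl
  mul_one _ := rfl
  inv_mul_cancel := AddEquiv.self_trans_symm

/-- The data of a finite reduced crystallographic root system `Φ`, with a chosen system of
positive roots `pos` cut out by a homomorphism `f : X → ℝ` not vanishing on any root, inside a
finitely generated free abelian group `X` (the weight lattice).  For each root `α` we record its
coroot `coroot α : X →+ ℤ` and the associated reflection `s α : x ↦ x - ⟨x, α∨⟩ • α`, an
automorphism of `X`.  The reflections preserve `Φ` and the coroots are equivariant for them. -/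
structure RootSystemData (X : Type*) [AddCommGroup X] [Module.Free ℤ X] [Module.Finite ℤ X] where
  /-- the (finite) set of roots -/
  Φ : Finset X
  /-- the set of positive roots -/
  pos : Finset X
  /-- the coroot attached to each root, as a homomorphism `X → ℤ` -/
  coroot : X → (X →+ ℤ)
  /-- the reflection attached to each root -/
  s : X → AddAut X
  /-- a homomorphism `X → ℝ` cutting out the positive roots -/
  f : X →+ ℝ
  f_ne : ∀ α ∈ Φ, f α ≠ 0
  pos_def : ∀ α, α ∈ pos ↔ α ∈ Φ ∧ 0 < f α
  pairing_self : ∀ α ∈ Φ, coroot α α = 2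
  s_apply : ∀ α ∈ Φ, ∀ x : X, s α x = x - coroot α x • α
  s_stable : ∀ α ∈ Φ, ∀ β ∈ Φ, s α β ∈ Φ
  reduced : ∀ α ∈ Φ, ∀ n : ℤ, n • α ∈ Φ → n = 1 ∨ n = -1
  coroot_equivariant : ∀ α ∈ Φ, ∀ β ∈ Φ, ∀ x : X, coroot (s α β) x = coroot β ((s α)⁻¹ x)

namespace RootSystemData

variable {X : Type*} [AddCommGroup X] [Module.Free ℤ X] [Module.Finite ℤ X] [DecidableEq X]
  (R : RootSystemData X)

/-- The Weyl group `W`, the subgroup of `Aut(X)` generated by the reflections `s_α`, `α ∈ Φ`. -/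
def W : Subgroup (AddAut X) := Subgroup.closure (R.s '' ↑R.Φ)

/-- A weight `λ` is dominant if `⟨λ, α∨⟩ ≥ 0` for all positive roots `α`. -/
def IsDominant (lam : X) : Prop := ∀ α ∈ R.pos, 0 ≤ R.coroot α lam

/-- `ℓ(u) = #{α ∈ Φ⁺ : uα ∈ −Φ⁺}` for `u` in the (finite) Weyl group. -/
def lenW (u : AddAut X) : ℕ := (R.pos.filter (fun α => -(u α) ∈ R.pos)).card

/-- The Iwahori–Matsumoto length of the element `u t_λ` of the extended affine Weyl group
`W_aff = W ⋉ X`: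
`ℓ(u t_λ) = Σ_{α ∈ Φ⁺ ∩ u⁻¹(Φ⁺)} |⟨λ, α∨⟩| + Σ_{α ∈ Φ⁺ ∩ u⁻¹(−Φ⁺)} |1 + ⟨λ, α∨⟩|`. -/
def lenAff (u : AddAut X) (lam : X) : ℕ :=
  ∑ α ∈ R.pos.filter (fun α => u α ∈ R.pos), (R.coroot α lam).natAbs
    + ∑ α ∈ R.pos.filter (fun α => -(u α) ∈ R.pos), (1 + R.coroot α lam).natAbs

/-- The length of the translation `t_λ`: `ℓ(t_λ) = Σ_{α ∈ Φ⁺} |⟨λ, α∨⟩|`. -/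
def lenT (lam : X) : ℕ := ∑ α ∈ R.pos, (R.coroot α lam).natAbs

end RootSystemData

namespace RootSystemData

variable {X : Type*} [AddCommGroup X] [Module.Free ℤ X] [Module.Finite ℤ X] [DecidableEq X]
  (R : RootSystemData X)

/-- Elements of the extended affine Weyl group `W_aff = W ⋉ X`: the pair `(u, λ)` represents
the element `u t_λ` (every element of `W_aff` is uniquely of this form). -/
abbrev WAff := R.W × X

/-- Multiplication in `W_aff`: `(u t_λ)(v t_μ) = (uv) t_{v⁻¹λ + μ}`, using
`t_λ v = v t_{v⁻¹ λ}` (equivalently `u t_λ u⁻¹ = t_{uλ}`). -/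
def waffMul (p q : R.WAff) : R.WAff :=
  (p.1 * q.1, ((q.1 : AddAut X))⁻¹ p.2 + q.2)

/-- The Iwahori–Matsumoto length of an element of `W_aff`. -/
def lenWAff (p : R.WAff) : ℕ := R.lenAff (p.1 : AddAut X) p.2

/-- The braid relations: `T_g T_h = T_{gh}` whenever `ℓ(gh) = ℓ(g) + ℓ(h)`. -/
def braidRels : Set (FreeGroup R.WAff) :=
  { r | ∃ g h : R.WAff, R.lenWAff (R.waffMul g h) = R.lenWAff g + R.lenWAff h ∧
      r = FreeGroup.of g * FreeGroup.of h * (FreeGroup.of (R.waffMul g h))⁻¹ }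

/-- The extended affine braid group `B_aff`: the group generated by the symbols `T_g`,
`g ∈ W_aff`, subject to the relations `T_g T_h = T_{gh}` whenever `ℓ(gh) = ℓ(g) + ℓ(h)`. -/
abbrev BraidAff := PresentedGroup R.braidRels

/-- The generator `T_g` of `B_aff` attached to `g ∈ W_aff`. -/
def T (g : R.WAff) : R.BraidAff := PresentedGroup.of g

end RootSystemData

/-!
Since `wλ` is dominant, `ℓ(w⁻¹ t_{wλ}) = ℓ(w⁻¹) + ℓ(t_{wλ})`. Moreover `ℓ(t_λ) = ℓ(t_{wλ})`, because
`2 ℓ(t_λ) = Σ_{α ∈ Φ} |⟨λ, α∨⟩|` is `W`-invariant; as `t_λ w⁻¹ = w⁻¹ t_{wλ}`, this gives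
`ℓ(t_λ w⁻¹) = ℓ(t_λ) + ℓ(w⁻¹)` as well. The braid relations then yield
`T_{t_λ} T_{w⁻¹} = T_{w⁻¹ t_{wλ}} = T_{w⁻¹} T_{t_{wλ}}`.
-/

namespace AddAut

variable {A : Type*} [Add A]

@[simp] lemma groupOfComp_one_apply (x : A) : (1 : AddAut A) x = x := rfl

@[simp] lemma groupOfComp_inv_apply_self (g : AddAut A) (x : A) : g⁻¹ (g x) = x :=
  g.symm_apply_apply x

@[simp] lemma groupOfComp_apply_inv_self (g : AddAut A) (x : A) : g (g⁻¹ x) = x :=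
  g.apply_symm_apply x

end AddAut

namespace RootSystemData

variable {X : Type*} [AddCommGroup X] [Module.Free ℤ X] [Module.Finite ℤ X] (R : RootSystemData X)

lemma s_s_apply {α : X} (hα : α ∈ R.Φ) (x : X) : R.s α (R.s α x) = x := by
  rw [R.s_apply α hα, R.s_apply α hα x, map_sub, map_zsmul, R.pairing_self α hα, smul_eq_mul,
    mul_two, sub_smul, add_smul]
  abel

lemma s_inv {α : X} (hα : α ∈ R.Φ) : (R.s α)⁻¹ = R.s α :=
  inv_eq_of_mul_eq_one_right <| AddEquiv.ext (R.s_s_apply hα)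

lemma s_self {α : X} (hα : α ∈ R.Φ) : R.s α α = -α := by
  rw [R.s_apply α hα, R.pairing_self α hα, two_smul]
  abel

lemma neg_mem_Φ {α : X} (hα : α ∈ R.Φ) : -α ∈ R.Φ :=
  R.s_self hα ▸ R.s_stable α hα α hα

lemma coroot_neg {α : X} (hα : α ∈ R.Φ) (x : X) : R.coroot (-α) x = -R.coroot α x := by
  rw [← R.s_self hα, R.coroot_equivariant α hα α hα, R.s_inv hα, R.s_apply α hα, map_sub,
    map_zsmul, R.pairing_self α hα, smul_eq_mul]
  ring

lemma mem_Φ_of_mem_pos {α : X} (hα : α ∈ R.pos) : α ∈ R.Φ := ((R.pos_def α).1 hα).1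

lemma mem_pos_iff_neg_notMem_pos {α : X} (hα : α ∈ R.Φ) : α ∈ R.pos ↔ -α ∉ R.pos := by
  rw [R.pos_def, R.pos_def, map_neg, neg_pos, not_and, not_lt]
  have := R.f_ne α hα
  exact ⟨fun h _ => h.2.le, fun h => ⟨hα, (h (R.neg_mem_Φ hα)).lt_of_ne' this⟩⟩

lemma mem_Φ_and_coroot_apply_of_mem_W {u : AddAut X} (hu : u ∈ R.W) {β : X} (hβ : β ∈ R.Φ) :
    u β ∈ R.Φ ∧ ∀ x, R.coroot (u β) (u x) = R.coroot β x := by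
  have hs : ∀ α ∈ R.Φ, ∀ β ∈ R.Φ,
      R.s α β ∈ R.Φ ∧ ∀ x, R.coroot (R.s α β) (R.s α x) = R.coroot β x :=
    fun α hα β hβ => ⟨R.s_stable α hα β hβ, fun x => by
      rw [R.coroot_equivariant α hα β hβ, R.s_inv hα, R.s_s_apply hα]⟩
  induction hu using Subgroup.closure_induction'' generalizing β with
  | mem _ hg =>
    obtain ⟨α, hα, rfl⟩ := hg
    exact hs α hα β hβ
  | inv_mem _ hg =>
    obtain ⟨α, hα, rfl⟩ := hg
    exact R.s_inv hα ▸ hs α hα β hβ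
  | one => simpa using hβ
  | mul g h _ _ ihg ihh =>
    obtain ⟨hhβ, hh⟩ := ihh hβ
    obtain ⟨hghβ, hg⟩ := ihg hhβ
    exact ⟨hghβ, fun x => (hg (h x)).trans (hh x)⟩

/-- `Σ_{α ∈ Φ} |⟨λ, α∨⟩|`: manifestly `W`-invariant, and twice `ℓ(t_λ)`. -/
def sumAbsCoroot (lam : X) : ℕ := ∑ α ∈ R.Φ, (R.coroot α lam).natAbs

lemma sumAbsCoroot_apply_of_mem_W {u : AddAut X} (hu : u ∈ R.W) (lam : X) :
    R.sumAbsCoroot (u lam) = R.sumAbsCoroot lam :=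
  Finset.sum_nbij' (fun α => u⁻¹ α) u
    (fun _ hα => (R.mem_Φ_and_coroot_apply_of_mem_W (inv_mem hu) hα).1)
    (fun _ hα => (R.mem_Φ_and_coroot_apply_of_mem_W hu hα).1) (by simp) (by simp)
    fun α hα => by
      rw [← (R.mem_Φ_and_coroot_apply_of_mem_W (inv_mem hu) hα).2 (u lam)]
      simp

lemma sumAbsCoroot_eq_two_mul_lenT (lam : X) : R.sumAbsCoroot lam = 2 * R.lenT lam := by
  classical
  have hpos : R.Φ.filter (· ∈ R.pos) = R.pos := by
    ext α
    simpa using fun h => R.mem_Φ_of_mem_pos h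
  have hneg : ∑ α ∈ R.Φ.filter (· ∉ R.pos), (R.coroot α lam).natAbs = R.lenT lam := by
    refine Finset.sum_nbij' (- ·) (- ·) ?_ ?_ (by simp) (by simp) ?_
    · intro α hα
      rw [Finset.mem_filter] at hα
      have hα' : - -α ∉ R.pos := (neg_neg α).symm ▸ hα.2
      exact (R.mem_pos_iff_neg_notMem_pos (R.neg_mem_Φ hα.1)).2 hα'
    · intro α hα
      have hαΦ := R.mem_Φ_of_mem_pos hα
      rw [Finset.mem_filter]
      exact ⟨R.neg_mem_Φ hαΦ, (R.mem_pos_iff_neg_notMem_pos hαΦ).1 hα⟩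
    · intro α hα
      simp only [Finset.mem_filter] at hα
      rw [R.coroot_neg hα.1, Int.natAbs_neg]
  rw [sumAbsCoroot, ← Finset.sum_filter_add_sum_filter_not R.Φ (· ∈ R.pos), hpos, hneg, lenT,
    two_mul]

lemma lenT_apply_of_mem_W {u : AddAut X} (hu : u ∈ R.W) (lam : X) :
    R.lenT (u lam) = R.lenT lam := by
  have := R.sumAbsCoroot_apply_of_mem_W hu lam
  rw [R.sumAbsCoroot_eq_two_mul_lenT, R.sumAbsCoroot_eq_two_mul_lenT] at this
  omega

variable [DecidableEq X]

lemma lenAff_zero (u : AddAut X) : R.lenAff u 0 = R.lenW u := by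
  simp [lenAff, lenW]

lemma lenAff_one (lam : X) : R.lenAff 1 lam = R.lenT lam := by
  have hpos : R.pos.filter (fun α => (1 : AddAut X) α ∈ R.pos) = R.pos :=
    Finset.filter_true_of_mem fun _ hα => hα
  have hneg : R.pos.filter (fun α => -((1 : AddAut X) α) ∈ R.pos) = ∅ :=
    Finset.filter_false_of_mem fun α hα =>
      (R.mem_pos_iff_neg_notMem_pos (R.mem_Φ_of_mem_pos hα)).1 hα
  rw [lenAff, lenT, hpos, hneg, Finset.sum_empty, add_zero]

/-- Each inversion `α` of `u` contributes `|1 + ⟨μ, α∨⟩| = |⟨μ, α∨⟩| + 1`. -/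
lemma lenAff_of_isDominant {u : AddAut X} (hu : u ∈ R.W) {mu : X} (hmu : R.IsDominant mu) :
    R.lenAff u mu = R.lenT mu + R.lenW u := by
  have hinv : R.pos.filter (fun α => -(u α) ∈ R.pos) = R.pos.filter (fun α => u α ∉ R.pos) :=
    Finset.filter_congr fun α hα => by
      have huα := (R.mem_Φ_and_coroot_apply_of_mem_W hu (R.mem_Φ_of_mem_pos hα)).1
      rw [R.mem_pos_iff_neg_notMem_pos (R.neg_mem_Φ huα), neg_neg]
  have habs : ∀ α ∈ R.pos.filter (fun α => u α ∉ R.pos),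
      (1 + R.coroot α mu).natAbs = (R.coroot α mu).natAbs + 1 := fun α hα => by
    have := hmu α (Finset.mem_filter.1 hα).1
    omega
  rw [lenAff, lenW, lenT, hinv, Finset.sum_congr rfl habs, Finset.sum_add_distrib,
    Finset.card_eq_sum_ones, ← Finset.sum_filter_add_sum_filter_not R.pos (u · ∈ R.pos)]
  ring

lemma T_mul_T {g h : R.WAff} (hlen : R.lenWAff (R.waffMul g h) = R.lenWAff g + R.lenWAff h) :
    R.T g * R.T h = R.T (R.waffMul g h) := by
  have hrel : (R.T g * R.T h) * (R.T (R.waffMul g h))⁻¹ = 1 :=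
    (QuotientGroup.eq_one_iff _).2 (Subgroup.subset_normalClosure ⟨g, h, hlen, rfl⟩)
  exact mul_inv_eq_one.1 hrel

lemma T_mul_T_translation_of_isDominant (u : R.W) {mu : X} (hmu : R.IsDominant mu) :
    R.T (u, 0) * R.T (1, mu) = R.T (u, mu) := by
  have hmul : R.waffMul (u, 0) (1, mu) = (u, mu) := by simp [waffMul]
  rw [R.T_mul_T, hmul]
  simp only [hmul, lenWAff, OneMemClass.coe_one, R.lenAff_of_isDominant u.2 hmu, R.lenAff_zero,
    R.lenAff_one, add_comm]

lemma T_translation_mul_T_of_isDominant (u : R.W) {lam : X}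
    (hdom : R.IsDominant ((u : AddAut X)⁻¹ lam)) :
    R.T (1, lam) * R.T (u, 0) = R.T (u, (u : AddAut X)⁻¹ lam) := by
  have hmul : R.waffMul (1, lam) (u, 0) = (u, (u : AddAut X)⁻¹ lam) := by simp [waffMul]
  rw [R.T_mul_T, hmul]
  simp only [hmul, lenWAff, OneMemClass.coe_one, R.lenAff_of_isDominant u.2 hdom, R.lenAff_zero,
    R.lenAff_one, R.lenT_apply_of_mem_W (inv_mem u.2)]

end RootSystemData

/-- Let `λ ∈ X` and let `w ∈ W` be such that `wλ` is dominant.  Then in the extended affine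
braid group `B_aff` one has `T_{t_λ} = T_{w⁻¹} · T_{t_{wλ}} · (T_{w⁻¹})⁻¹` (since `wλ` is
dominant, `T_{t_{wλ}}` is the element `θ_{wλ}` of the Bernstein presentation). -/
theorem T_t_lambda_conj
    {X : Type*} [AddCommGroup X] [Module.Free ℤ X] [Module.Finite ℤ X] [DecidableEq X]
    (R : RootSystemData X) (lam : X) (w : R.W)
    (hdom : R.IsDominant ((w : AddAut X) lam)) :
    R.T (1, lam) = R.T (w⁻¹, (0 : X)) * R.T (1, (w : AddAut X) lam) * (R.T (w⁻¹, (0 : X)))⁻¹ := by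
  have hconj : R.T (1, lam) * R.T (w⁻¹, 0) = R.T (w⁻¹, (w : AddAut X) lam) := by
    simpa using R.T_translation_mul_T_of_isDominant w⁻¹ (lam := lam) (by simpa using hdom)
  rw [R.T_mul_T_translation_of_isDominant w⁻¹ hdom, ← hconj, mul_inv_cancel_right]
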